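/- arXiv:2005.00838 — 7 statements merged into one kernel-verified Lean document; each statement's English description precedes it below -/
import Mathlib

section
/- Let F be a field and let A and B be finite sets (possibly overlapping). For subspaces V_A ⊆ F_A and V_B ⊆ F_B, taking the extended sum and extended intersection in F_{A∪B} and orthogonal complements with respect to the dot product on the relevant ground set, one has (V_A + V_B)^⊥ = V_A^⊥ ∩ V_B^⊥ and (V_A ∩ V_B)^⊥ = V_A^⊥ + V_B^⊥ (on the left-hand sides the orthogonal complement is taken in F_{A∪B}, on the right-hand sides V_A^⊥ ⊆ F_A and V_B^⊥ ⊆ F_B). -/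
noncomputable section

open scoped BigOperators

/-- Dot product of two vectors indexed by a finite type. -/
def dotProd {F α : Type*} [Field F] [Fintype α] (f g : α → F) : F :=
  ∑ x, f x * g x

/-- Orthogonal complement of `K` taken within `F_X`, the space of vectors supported on `X`. -/
def perpOn {F α : Type*} [Field F] [Fintype α] (X : Set α) (K : Set (α → F)) :
    Set (α → F) :=
  {g | (∀ x ∉ X, g x = 0) ∧ ∀ f ∈ K, dotProd f g = 0}

/-- Extended sum of two collections of vectors (vectors encoded with zero extension). -/
def extSum {F α : Type*} [Field F] (K₁ K₂ : Set (α → F)) : Set (α → F) :=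
  {h | ∃ f ∈ K₁, ∃ g ∈ K₂, h = f + g}

/-- Extended intersection of `K₁ ⊆ F_A` and `K₂ ⊆ F_B`, taken inside `F_{A∪B}`. -/
def extInter {F α : Type*} [Field F] (A B : Set α) (K₁ K₂ : Set (α → F)) :
    Set (α → F) :=
  {h | (∀ x ∉ A ∪ B, h x = 0) ∧ A.indicator h ∈ K₁ ∧ B.indicator h ∈ K₂}

/-!
Part one is a direct computation: a vector supported on `A ∪ B` is orthogonal to `V_A + V_B`
exactly when its restrictions to `A` and `B` are orthogonal to `V_A` and `V_B`, since the dot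
product with a vector supported on `A` only sees the restriction to `A`.
Part two follows from part one applied to `V_A^⊥` and `V_B^⊥`: the double-perp identity
`(V^⊥)^⊥ = V` inside `F_X` turns it into `V_A ∩ V_B = (V_A^⊥ + V_B^⊥)^⊥`, and taking perps
once more in `F_{A∪B}` gives the claim.
-/

open Matrix

section

variable {F α : Type*} [Field F]

lemma coe_sup_eq_extSum (p q : Submodule F (α → F)) :
    ((p ⊔ q : Submodule F (α → F)) : Set (α → F)) = extSum (p : Set (α → F)) q := by
  ext h
  simp [extSum, Submodule.mem_sup, eq_comm]

lemma sup_apply_eq_zero_of_notMem_union {A B : Set α} {p q : Submodule F (α → F)}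
    (hp : ∀ f ∈ p, ∀ x ∉ A, f x = 0) (hq : ∀ g ∈ q, ∀ x ∉ B, g x = 0) :
    ∀ h ∈ p ⊔ q, ∀ x ∉ A ∪ B, h x = 0 := by
  intro h hh x hx
  obtain ⟨f, hf, g, hg, rfl⟩ := Submodule.mem_sup.mp hh
  rw [Set.mem_union, not_or] at hx
  simp [hp f hf x hx.1, hq g hg x hx.2]

variable [Fintype α]

lemma dotProd_eq_dotProduct (f g : α → F) : dotProd f g = f ⬝ᵥ g := rfl

lemma dotProduct_indicator_right_of_support {A : Set α} {f : α → F}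
    (hf : ∀ x ∉ A, f x = 0) (g : α → F) : f ⬝ᵥ A.indicator g = f ⬝ᵥ g :=
  Finset.sum_congr rfl fun x _ => by by_cases hx : x ∈ A <;> simp [hx, hf x]

lemma dotProduct_indicator_left_of_support {A : Set α} {g : α → F}
    (hg : ∀ x ∉ A, g x = 0) (f : α → F) : A.indicator f ⬝ᵥ g = f ⬝ᵥ g := by
  rw [dotProduct_comm, dotProduct_indicator_right_of_support hg, dotProduct_comm]

lemma dotProductBilin_nondegenerate :
    LinearMap.BilinForm.Nondegenerate (dotProductBilin F F : LinearMap.BilinForm F (α → F)) :=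
  ⟨fun f hf => dotProduct_eq_zero f hf,
    fun g hg => dotProduct_eq_zero g fun f => (dotProduct_comm g f).trans (hg f)⟩

lemma dotProductBilin_isRefl :
    LinearMap.BilinForm.IsRefl (dotProductBilin F F : LinearMap.BilinForm F (α → F)) :=
  fun f g h => (dotProduct_comm g f).trans h

lemma mem_dotProductBilin_orthogonal {V : Submodule F (α → F)} {g : α → F} :
    g ∈ LinearMap.BilinForm.orthogonal (dotProductBilin F F) V ↔ ∀ f ∈ V, f ⬝ᵥ g = 0 := by
  simp [LinearMap.BilinForm.mem_orthogonal_iff]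

def perpOnSubmodule (X : Set α) (K : Set (α → F)) : Submodule F (α → F) where
  carrier := perpOn X K
  add_mem' {a b} ha hb := ⟨fun x hx => by simp [ha.1 x hx, hb.1 x hx], fun f hf => by
    have hfa : f ⬝ᵥ a = 0 := ha.2 f hf
    have hfb : f ⬝ᵥ b = 0 := hb.2 f hf
    rw [dotProd_eq_dotProduct, dotProduct_add, hfa, hfb, add_zero]⟩
  zero_mem' := ⟨fun _ _ => rfl, fun f _ => dotProduct_zero f⟩
  smul_mem' c a ha := ⟨fun x hx => by simp [ha.1 x hx], fun f hf => by
    have hfa : f ⬝ᵥ a = 0 := ha.2 f hf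
    rw [dotProd_eq_dotProduct, dotProduct_smul, hfa, smul_zero]⟩

@[simp]
lemma coe_perpOnSubmodule (X : Set α) (K : Set (α → F)) :
    (perpOnSubmodule X K : Set (α → F)) = perpOn X K := rfl

theorem perpOn_perpOn {A : Set α} {V : Submodule F (α → F)}
    (hV : ∀ f ∈ V, ∀ x ∉ A, f x = 0) :
    perpOn A (perpOn A (V : Set (α → F))) = V := by
  ext h
  refine ⟨fun ⟨hhA, hh⟩ => ?_, fun hh => ⟨hV h hh, fun g hg => ?_⟩⟩
  · -- In all of `F_α`, `h ⊥ V^⊥` since any `g ∈ V^⊥` may be cut down to `A`; there `V^⊥⊥ = V`.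
    have hperp : h ∈ LinearMap.BilinForm.orthogonal (dotProductBilin F F)
        (LinearMap.BilinForm.orthogonal (dotProductBilin F F) V) := by
      refine mem_dotProductBilin_orthogonal.mpr fun g hg => ?_
      have hgA : A.indicator g ∈ perpOn A (V : Set (α → F)) :=
        ⟨fun x hx => Set.indicator_of_notMem hx g, fun f hf =>
          (dotProduct_indicator_right_of_support (hV f hf) g).trans
            (mem_dotProductBilin_orthogonal.mp hg f hf)⟩
      rw [← dotProduct_indicator_left_of_support hhA]
      exact hh _ hgA
    rwa [LinearMap.BilinForm.orthogonal_orthogonal dotProductBilin_nondegenerate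
      dotProductBilin_isRefl] at hperp
  · exact (dotProduct_comm g h).trans (hg.2 h hh)

theorem perpOn_union_extSum (A B : Set α) {VA VB : Submodule F (α → F)}
    (hA : ∀ f ∈ VA, ∀ x ∉ A, f x = 0) (hB : ∀ g ∈ VB, ∀ x ∉ B, g x = 0) :
    perpOn (A ∪ B) (extSum (VA : Set (α → F)) VB)
      = extInter A B (perpOn A (VA : Set (α → F))) (perpOn B (VB : Set (α → F))) := by
  ext h
  simp only [perpOn, extInter, extSum, Set.mem_ofPred_eq, SetLike.mem_coe, dotProd_eq_dotProduct]
  refine ⟨fun ⟨hsupp, hh⟩ => ⟨hsupp,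
      ⟨fun x hx => Set.indicator_of_notMem hx h, fun f hf => ?_⟩,
      ⟨fun x hx => Set.indicator_of_notMem hx h, fun g hg => ?_⟩⟩,
    fun ⟨hsupp, ⟨_, hhA⟩, ⟨_, hhB⟩⟩ => ⟨hsupp, ?_⟩⟩
  · rw [dotProduct_indicator_right_of_support (hA f hf)]
    exact hh f ⟨f, hf, 0, VB.zero_mem, (add_zero f).symm⟩
  · rw [dotProduct_indicator_right_of_support (hB g hg)]
    exact hh g ⟨0, VA.zero_mem, g, hg, (zero_add g).symm⟩
  · rintro _ ⟨f, hf, g, hg, rfl⟩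
    rw [add_dotProduct, ← dotProduct_indicator_right_of_support (hA f hf),
      ← dotProduct_indicator_right_of_support (hB g hg), hhA f hf, hhB g hg, add_zero]

end

/-- `(V_A + V_B)^⊥ = V_A^⊥ ∩ V_B^⊥` and `(V_A ∩ V_B)^⊥ = V_A^⊥ + V_B^⊥`,
with perps on the left in `F_{A∪B}` and on the right in `F_A`, `F_B`. -/
theorem stmt0 {F α : Type*} [Field F] [Fintype α] (A B : Set α)
    (VA VB : Submodule F (α → F))
    (hA : ∀ f ∈ VA, ∀ x ∉ A, f x = 0)
    (hB : ∀ g ∈ VB, ∀ x ∉ B, g x = 0) :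
    perpOn (A ∪ B) (extSum (VA : Set (α → F)) (VB : Set (α → F)))
        = extInter A B (perpOn A (VA : Set (α → F))) (perpOn B (VB : Set (α → F)))
    ∧ perpOn (A ∪ B) (extInter A B (VA : Set (α → F)) (VB : Set (α → F)))
        = extSum (perpOn A (VA : Set (α → F))) (perpOn B (VB : Set (α → F))) := by
  refine ⟨perpOn_union_extSum A B hA hB, ?_⟩
  set PA := perpOnSubmodule A (VA : Set (α → F))
  set PB := perpOnSubmodule B (VB : Set (α → F))
  have hPA : ∀ f ∈ PA, ∀ x ∉ A, f x = 0 := fun _ hf => hf.1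
  have hPB : ∀ g ∈ PB, ∀ x ∉ B, g x = 0 := fun _ hg => hg.1
  have hinter : extInter A B (VA : Set (α → F)) VB
      = perpOn (A ∪ B) ((PA ⊔ PB : Submodule F (α → F)) : Set (α → F)) := by
    rw [coe_sup_eq_extSum, perpOn_union_extSum A B hPA hPB, coe_perpOnSubmodule,
      coe_perpOnSubmodule, perpOn_perpOn hA, perpOn_perpOn hB]
  rw [hinter, perpOn_perpOn (sup_apply_eq_zero_of_notMem_union hPA hPB), coe_sup_eq_extSum]
  rfl
end
end

section
/- (Implicit Inversion Theorem, existence) Let F be a field, let S, P, Q be pairwise disjoint finite sets, and let V_SP ⊆ F_{S∪P} and V_SQ ⊆ F_{S∪Q} be subspaces. There exists a subspace V_PQ ⊆ F_{P∪Q} with V_SP ↔ V_PQ = V_SQ if and only if V_SP∘S ⊇ V_SQ∘S and V_SP×S ⊆ V_SQ×S. Moreover, when these two conditions hold, the subspace V_SP ↔ V_SQ is such a solution, i.e. V_SP ↔ (V_SP ↔ V_SQ) = V_SQ. -/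
noncomputable section

open scoped BigOperators

/-- Matched composition over the shared (middle) index set. -/
def matchedComp {A C B : Type*} (K₁ : Set (A × C)) (K₂ : Set (C × B)) : Set (A × B) :=
  {x | ∃ c, (x.1, c) ∈ K₁ ∧ (c, x.2) ∈ K₂}

section Sets

variable {A C B : Type*}

theorem fst_image_matchedComp_subset (K₁ : Set (A × C)) (K₂ : Set (C × B)) :
    Prod.fst '' matchedComp K₁ K₂ ⊆ Prod.fst '' K₁ := by
  rintro _ ⟨x, ⟨c, hc, -⟩, rfl⟩
  exact ⟨(x.1, c), hc, rfl⟩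

theorem mk_mem_matchedComp {K₁ : Set (A × C)} {K₂ : Set (C × B)} {a : A} {b : B} {c : C}
    (h₁ : (a, c) ∈ K₁) (h₂ : (c, b) ∈ K₂) : (a, b) ∈ matchedComp K₁ K₂ :=
  ⟨c, h₁, h₂⟩

end Sets

namespace Submodule

variable {R M N L : Type*} [Ring R] [AddCommGroup M] [AddCommGroup N] [AddCommGroup L]
  [Module R M] [Module R N] [Module R L]

/-- The matched composition `V ↔ W` over the common first factor `M`. -/
def compOverFst (V : Submodule R (M × N)) (W : Submodule R (M × L)) : Submodule R (N × L) where
  carrier := {y | ∃ f : M, (f, y.1) ∈ V ∧ (f, y.2) ∈ W}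
  zero_mem' := ⟨0, V.zero_mem, W.zero_mem⟩
  add_mem' := by
    rintro a b ⟨fa, ha₁, ha₂⟩ ⟨fb, hb₁, hb₂⟩
    exact ⟨fa + fb, V.add_mem ha₁ hb₁, W.add_mem ha₂ hb₂⟩
  smul_mem' := by
    rintro c a ⟨fa, ha₁, ha₂⟩
    exact ⟨c • fa, V.smul_mem c ha₁, W.smul_mem c ha₂⟩

variable {V : Submodule R (M × N)} {W : Submodule R (M × L)}

theorem mk_zero_mem_matchedComp (U : Submodule R (N × L)) {f : M} (hf : (f, 0) ∈ V) :
    (f, (0 : L)) ∈ matchedComp (V : Set (M × N)) (U : Set (N × L)) :=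
  mk_mem_matchedComp hf U.zero_mem

/-- Two pairs of `V` through the same middle vector differ by an element of the contraction
`V × M`, which the hypothesis moves into `W`. -/
theorem matchedComp_compOverFst_subset
    (hcontr : {f : M | (f, (0 : N)) ∈ V} ⊆ {f : M | (f, (0 : L)) ∈ W}) :
    matchedComp (V : Set (M × N)) (compOverFst V W) ⊆ (W : Set (M × L)) := by
  rintro ⟨f, h⟩ ⟨g, hfg, f', hf'g, hf'h⟩
  have hdiff : (f - f', (0 : N)) ∈ V := by simpa using V.sub_mem hfg hf'g
  simpa using W.add_mem (hcontr hdiff) hf'h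

theorem subset_matchedComp_compOverFst
    (hrestr : Prod.fst '' (W : Set (M × L)) ⊆ Prod.fst '' (V : Set (M × N))) :
    (W : Set (M × L)) ⊆ matchedComp (V : Set (M × N)) (compOverFst V W) := by
  rintro ⟨f, h⟩ hfh
  obtain ⟨⟨f', g⟩, hfg, rfl⟩ := hrestr ⟨(f, h), hfh, rfl⟩
  exact mk_mem_matchedComp hfg ⟨f', hfg, hfh⟩

theorem matchedComp_compOverFst
    (hrestr : Prod.fst '' (W : Set (M × L)) ⊆ Prod.fst '' (V : Set (M × N)))
    (hcontr : {f : M | (f, (0 : N)) ∈ V} ⊆ {f : M | (f, (0 : L)) ∈ W}) :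
    matchedComp (V : Set (M × N)) (compOverFst V W) = (W : Set (M × L)) :=
  (matchedComp_compOverFst_subset hcontr).antisymm (subset_matchedComp_compOverFst hrestr)

end Submodule

open Submodule in
theorem stmt3_general (F S P Q : Type*) [Field F]
    (VSP : Submodule F ((S → F) × (P → F))) (VSQ : Submodule F ((S → F) × (Q → F))) :
    ((∃ VPQ : Submodule F ((P → F) × (Q → F)),
        matchedComp (VSP : Set ((S → F) × (P → F))) (VPQ : Set ((P → F) × (Q → F)))
          = (VSQ : Set ((S → F) × (Q → F)))) ↔
      (Prod.fst '' (VSQ : Set ((S → F) × (Q → F)))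
          ⊆ Prod.fst '' (VSP : Set ((S → F) × (P → F)))
        ∧ {f : S → F | (f, (0 : P → F)) ∈ VSP} ⊆ {f : S → F | (f, (0 : Q → F)) ∈ VSQ}))
    ∧ ((Prod.fst '' (VSQ : Set ((S → F) × (Q → F)))
          ⊆ Prod.fst '' (VSP : Set ((S → F) × (P → F)))
        ∧ {f : S → F | (f, (0 : P → F)) ∈ VSP} ⊆ {f : S → F | (f, (0 : Q → F)) ∈ VSQ}) →
      matchedComp (VSP : Set ((S → F) × (P → F)))
          {y : (P → F) × (Q → F) | ∃ f : S → F, (f, y.1) ∈ VSP ∧ (f, y.2) ∈ VSQ}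
        = (VSQ : Set ((S → F) × (Q → F)))) := by
  refine ⟨⟨?_, fun ⟨hrestr, hcontr⟩ => ⟨compOverFst VSP VSQ, matchedComp_compOverFst hrestr hcontr⟩⟩,
    fun ⟨hrestr, hcontr⟩ => matchedComp_compOverFst hrestr hcontr⟩
  rintro ⟨VPQ, hV⟩
  refine ⟨hV ▸ fst_image_matchedComp_subset _ _, fun f hf => ?_⟩
  have := mk_zero_mem_matchedComp VPQ hf
  rwa [hV] at this

/-- Implicit Inversion Theorem (existence): `V_SP ↔ V_PQ = V_SQ` has a subspace
solution `V_PQ` iff `V_SP∘S ⊇ V_SQ∘S` and `V_SP×S ⊆ V_SQ×S`; moreover, under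
those conditions `V_SP ↔ V_SQ` is a solution. -/
theorem stmt3 (F S P Q : Type*) [Field F] [Fintype S] [Fintype P] [Fintype Q]
    (VSP : Submodule F ((S → F) × (P → F))) (VSQ : Submodule F ((S → F) × (Q → F))) :
    ((∃ VPQ : Submodule F ((P → F) × (Q → F)),
        matchedComp (VSP : Set ((S → F) × (P → F))) (VPQ : Set ((P → F) × (Q → F)))
          = (VSQ : Set ((S → F) × (Q → F)))) ↔
      (Prod.fst '' (VSQ : Set ((S → F) × (Q → F)))
          ⊆ Prod.fst '' (VSP : Set ((S → F) × (P → F)))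
        ∧ {f : S → F | (f, (0 : P → F)) ∈ VSP} ⊆ {f : S → F | (f, (0 : Q → F)) ∈ VSQ}))
    ∧ ((Prod.fst '' (VSQ : Set ((S → F) × (Q → F)))
          ⊆ Prod.fst '' (VSP : Set ((S → F) × (P → F)))
        ∧ {f : S → F | (f, (0 : P → F)) ∈ VSP} ⊆ {f : S → F | (f, (0 : Q → F)) ∈ VSQ}) →
      matchedComp (VSP : Set ((S → F) × (P → F)))
          {y : (P → F) × (Q → F) | ∃ f : S → F, (f, y.1) ∈ VSP ∧ (f, y.2) ∈ VSQ}
        = (VSQ : Set ((S → F) × (Q → F)))) :=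
  stmt3_general F S P Q VSP VSQ
end
end

section
/- (Implicit Inversion Theorem, uniqueness) Let F be a field, let S, P, Q be pairwise disjoint finite sets, and let V_SP ⊆ F_{S∪P}, V_PQ ⊆ F_{P∪Q}, V_SQ ⊆ F_{S∪Q} be subspaces with V_SP ↔ V_PQ = V_SQ. If in addition V_SP∘P ⊇ V_PQ∘P and V_SP×P ⊆ V_PQ×P, then V_PQ = V_SP ↔ V_SQ; in particular, V_PQ is the unique subspace satisfying the equation V_SP ↔ V_PQ = V_SQ together with these two additional conditions. -/
noncomputable section

open scoped BigOperators

theorem stmt4_key {F S P Q : Type*} [Field F]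
    (VSP : Submodule F ((S → F) × (P → F))) (VPQ : Submodule F ((P → F) × (Q → F)))
    (VSQ : Submodule F ((S → F) × (Q → F)))
    (heq : matchedComp (VSP : Set ((S → F) × (P → F))) (VPQ : Set ((P → F) × (Q → F)))
        = (VSQ : Set ((S → F) × (Q → F))))
    (h1 : Prod.fst '' (VPQ : Set ((P → F) × (Q → F)))
        ⊆ Prod.snd '' (VSP : Set ((S → F) × (P → F))))
    (h2 : {g : P → F | ((0 : S → F), g) ∈ VSP} ⊆ {g : P → F | (g, (0 : Q → F)) ∈ VPQ}) :
    (VPQ : Set ((P → F) × (Q → F)))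
        = {y : (P → F) × (Q → F) | ∃ f : S → F, (f, y.1) ∈ VSP ∧ (f, y.2) ∈ VSQ} := by
  ext ⟨g, h⟩
  constructor
  · intro hgh
    obtain ⟨⟨f, g'⟩, hfg, hg'⟩ := h1 ⟨(g, h), hgh, rfl⟩
    simp only at hg'
    subst hg'
    refine ⟨f, hfg, ?_⟩
    have : ((f, h) : (S → F) × (Q → F)) ∈ matchedComp (VSP : Set ((S → F) × (P → F))) (VPQ : Set ((P → F) × (Q → F))) :=
      ⟨g', hfg, hgh⟩
    rw [heq] at this
    exact this
  · rintro ⟨f, hfg, hfh⟩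
    have hfh' : ((f, h) : (S → F) × (Q → F)) ∈ matchedComp (VSP : Set ((S → F) × (P → F))) (VPQ : Set ((P → F) × (Q → F))) := by
      rw [heq]; exact hfh
    obtain ⟨g', hfg', hg'h⟩ := hfh'
    have hz : ((0 : S → F), g - g') ∈ VSP := by
      have := VSP.sub_mem hfg hfg'
      simpa [Prod.ext_iff] using this
    have h3 : (g - g', (0 : Q → F)) ∈ VPQ := h2 hz
    have := VPQ.add_mem h3 hg'h
    simpa [Prod.ext_iff] using this

/-- Implicit Inversion Theorem (uniqueness): if `V_SP ↔ V_PQ = V_SQ`,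
`V_SP∘P ⊇ V_PQ∘P` and `V_SP×P ⊆ V_PQ×P`, then `V_PQ = V_SP ↔ V_SQ`, and `V_PQ`
is the unique subspace satisfying these conditions. -/
theorem stmt4 (F S P Q : Type*) [Field F] [Fintype S] [Fintype P] [Fintype Q]
    (VSP : Submodule F ((S → F) × (P → F))) (VPQ : Submodule F ((P → F) × (Q → F)))
    (VSQ : Submodule F ((S → F) × (Q → F)))
    (heq : matchedComp (VSP : Set ((S → F) × (P → F))) (VPQ : Set ((P → F) × (Q → F)))
        = (VSQ : Set ((S → F) × (Q → F))))
    (h1 : Prod.fst '' (VPQ : Set ((P → F) × (Q → F)))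
        ⊆ Prod.snd '' (VSP : Set ((S → F) × (P → F))))
    (h2 : {g : P → F | ((0 : S → F), g) ∈ VSP} ⊆ {g : P → F | (g, (0 : Q → F)) ∈ VPQ}) :
    (VPQ : Set ((P → F) × (Q → F)))
        = {y : (P → F) × (Q → F) | ∃ f : S → F, (f, y.1) ∈ VSP ∧ (f, y.2) ∈ VSQ}
    ∧ ∀ W : Submodule F ((P → F) × (Q → F)),
        matchedComp (VSP : Set ((S → F) × (P → F))) (W : Set ((P → F) × (Q → F)))
            = (VSQ : Set ((S → F) × (Q → F))) →
        Prod.fst '' (W : Set ((P → F) × (Q → F)))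
            ⊆ Prod.snd '' (VSP : Set ((S → F) × (P → F))) →
        {g : P → F | ((0 : S → F), g) ∈ VSP} ⊆ {g : P → F | (g, (0 : Q → F)) ∈ W} →
        W = VPQ := by
  refine ⟨stmt4_key VSP VPQ VSQ heq h1 h2, fun W hw1 hw2 hw3 => ?_⟩
  exact SetLike.coe_injective
    ((stmt4_key VSP W VSQ hw1 hw2 hw3).trans (stmt4_key VSP VPQ VSQ heq h1 h2).symm)
end
end

section
/- Let F be a field, let S, P, Q be pairwise disjoint finite sets, and let A_SP ⊆ F_{S∪P} and A_PQ ⊆ F_{P∪Q} be affine subspaces with vector space translates V_SP and V_PQ respectively, such that A_SP ↔ A_PQ is nonempty. Then A_PQ = A_SP ↔ (A_SP ↔ A_PQ) if and only if V_SP∘P ⊇ V_PQ∘P and V_SP×P ⊆ V_PQ×P. -/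
noncomputable section

open scoped BigOperators

/-- For affine subspaces `A_SP = a_SP + V_SP`, `A_PQ = a_PQ + V_PQ` with
`A_SP ↔ A_PQ` nonempty: `A_PQ = A_SP ↔ (A_SP ↔ A_PQ)` iff `V_SP∘P ⊇ V_PQ∘P`
and `V_SP×P ⊆ V_PQ×P`. -/
theorem stmt6 (F S P Q : Type*) [Field F] [Fintype S] [Fintype P] [Fintype Q]
    (VSP : Submodule F ((S → F) × (P → F))) (VPQ : Submodule F ((P → F) × (Q → F)))
    (aSP : (S → F) × (P → F)) (aPQ : (P → F) × (Q → F))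
    (hne : (matchedComp {x : (S → F) × (P → F) | x - aSP ∈ VSP}
        {y : (P → F) × (Q → F) | y - aPQ ∈ VPQ}).Nonempty) :
    ({z : (P → F) × (Q → F) | ∃ f : S → F,
        (f, z.1) ∈ {x : (S → F) × (P → F) | x - aSP ∈ VSP} ∧
        (f, z.2) ∈ matchedComp {x : (S → F) × (P → F) | x - aSP ∈ VSP}
          {y : (P → F) × (Q → F) | y - aPQ ∈ VPQ}}
      = {y : (P → F) × (Q → F) | y - aPQ ∈ VPQ})
    ↔ (Prod.fst '' (VPQ : Set ((P → F) × (Q → F)))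
          ⊆ Prod.snd '' (VSP : Set ((S → F) × (P → F)))
        ∧ {g : P → F | ((0 : S → F), g) ∈ VSP} ⊆ {g : P → F | (g, (0 : Q → F)) ∈ VPQ}) := by
  obtain ⟨⟨f₀, q₀⟩, p₀, hA₀, hB₀⟩ := hne
  simp only [Set.mem_setOf_eq] at hA₀ hB₀
  constructor
  · intro h
    constructor
    · rintro u ⟨w, hw, rfl⟩
      have hmem : ((p₀, q₀) + w) ∈ {y : (P → F) × (Q → F) | y - aPQ ∈ VPQ} := by
        have heq : ((p₀, q₀) + w) - aPQ = (((p₀, q₀) : (P → F) × (Q → F)) - aPQ) + w := by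
          abel
        simp only [Set.mem_setOf_eq, heq]
        exact VPQ.add_mem hB₀ hw
      rw [← h] at hmem
      obtain ⟨f, hfA, -⟩ := hmem
      simp only [Set.mem_setOf_eq] at hfA
      have hv := VSP.sub_mem hfA hA₀
      rw [sub_sub_sub_cancel_right] at hv
      refine ⟨_, hv, ?_⟩
      simp [Prod.sub_def]
    · intro g hg
      simp only [Set.mem_setOf_eq] at hg ⊢
      have hA' : ((f₀, p₀ + g) : (S → F) × (P → F)) - aSP ∈ VSP := by
        have heq : ((f₀, p₀ + g) : (S → F) × (P → F)) - aSP
            = (((f₀, p₀) : (S → F) × (P → F)) - aSP) + ((0 : S → F), g) := by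
          refine Prod.ext ?_ ?_ <;> simp only [Prod.fst_sub, Prod.fst_add, Prod.snd_sub, Prod.snd_add] <;> abel
        rw [heq]
        exact VSP.add_mem hA₀ hg
      have hmem : ((p₀ + g, q₀) : (P → F) × (Q → F)) ∈
          {z : (P → F) × (Q → F) | ∃ f : S → F,
            (f, z.1) ∈ {x : (S → F) × (P → F) | x - aSP ∈ VSP} ∧
            (f, z.2) ∈ matchedComp {x : (S → F) × (P → F) | x - aSP ∈ VSP}
              {y : (P → F) × (Q → F) | y - aPQ ∈ VPQ}} :=
        ⟨f₀, hA', ⟨p₀, hA₀, hB₀⟩⟩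
      rw [h] at hmem
      simp only [Set.mem_setOf_eq] at hmem
      have hv := VPQ.sub_mem hmem hB₀
      rw [sub_sub_sub_cancel_right] at hv
      have heq : ((p₀ + g, q₀) : (P → F) × (Q → F)) - (p₀, q₀) = (g, (0 : Q → F)) := by
        refine Prod.ext ?_ ?_ <;> simp only [Prod.fst_sub, Prod.snd_sub] <;> abel
      rwa [heq] at hv
  · rintro ⟨h1, h2⟩
    ext ⟨p, q⟩
    simp only [Set.mem_setOf_eq]
    constructor
    · rintro ⟨f, hfp, p', hfp', hp'q⟩
      simp only [Set.mem_setOf_eq] at hfp hfp' hp'q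
      have hv := VSP.sub_mem hfp hfp'
      rw [sub_sub_sub_cancel_right] at hv
      have hv' : ((0 : S → F), p - p') ∈ VSP := by
        have heq : ((f, p) : (S → F) × (P → F)) - (f, p') = ((0 : S → F), p - p') := by
          refine Prod.ext ?_ ?_ <;> simp only [Prod.fst_sub, Prod.snd_sub] <;> abel
        rwa [heq] at hv
      have hv2 : ((p - p', (0 : Q → F)) : (P → F) × (Q → F)) ∈ VPQ := h2 hv'
      have := VPQ.add_mem hp'q hv2
      have heq : (((p', q) : (P → F) × (Q → F)) - aPQ) + (p - p', (0 : Q → F))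
          = ((p, q) : (P → F) × (Q → F)) - aPQ := by
        refine Prod.ext ?_ ?_ <;> simp only [Prod.fst_sub, Prod.fst_add, Prod.snd_sub, Prod.snd_add] <;> abel
      rwa [heq] at this
    · intro hpq
      have hv := VPQ.sub_mem hpq hB₀
      rw [sub_sub_sub_cancel_right] at hv
      obtain ⟨w, hw, hw2⟩ := h1 ⟨_, hv, rfl⟩
      have key : ((f₀ + w.1, p) : (S → F) × (P → F)) - aSP ∈ VSP := by
        have heq : ((f₀ + w.1, p) : (S → F) × (P → F)) - aSP
            = (((f₀, p₀) : (S → F) × (P → F)) - aSP) + w := by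
          have hw2' : w.2 = p - p₀ := hw2
          refine Prod.ext ?_ ?_
          · simp only [Prod.fst_sub, Prod.fst_add]; abel
          · simp only [Prod.snd_sub, Prod.snd_add, hw2']; abel
        rw [heq]
        exact VSP.add_mem hA₀ hw
      exact ⟨f₀ + w.1, key, p, key, hpq⟩
end
end

section
/- (Implicit Inversion Theorem for collections closed under subtraction) Let F be a field, let S, P, Q be pairwise disjoint finite sets, let K_SP ⊆ F_{S∪P} be nonempty and closed under subtraction, and let K_SQ ⊆ F_{S∪Q} be an arbitrary subset. Then: (1) there exists a subset K_PQ ⊆ F_{P∪Q} with K_SP ↔ K_PQ = K_SQ if and only if K_SP∘S ⊇ K_SQ∘S and, for every (f_S, f_Q) ∈ K_SQ and every g_S ∈ K_SP×S, also (f_S + g_S, f_Q) ∈ K_SQ; moreover, when these conditions hold, K_PQ := K_SP ↔ K_SQ is such a solution. (2) If a solution K_PQ additionally satisfies K_SP∘P ⊇ K_PQ∘P and, for every (h_P, h_Q) ∈ K_PQ and every g_P ∈ K_SP×P, also (h_P + g_P, h_Q) ∈ K_PQ, then K_PQ = K_SP ↔ K_SQ; in particular the solution satisfying these additional conditions is unique.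 -/
noncomputable section

open scoped BigOperators

/-- Implicit Inversion Theorem for collections closed under subtraction:
existence and uniqueness of `K_PQ` with `K_SP ↔ K_PQ = K_SQ`. -/
theorem stmt15 (F S P Q : Type*) [Field F] [Fintype S] [Fintype P] [Fintype Q]
    (KSP : Set ((S → F) × (P → F))) (KSQ : Set ((S → F) × (Q → F)))
    (hne : KSP.Nonempty)
    (hsub : ∀ x ∈ KSP, ∀ y ∈ KSP, x - y ∈ KSP) :
    ((∃ KPQ : Set ((P → F) × (Q → F)), matchedComp KSP KPQ = KSQ) ↔
      (Prod.fst '' KSQ ⊆ Prod.fst '' KSP ∧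
        ∀ x ∈ KSQ, ∀ g : S → F, (g, (0 : P → F)) ∈ KSP → (x.1 + g, x.2) ∈ KSQ))
    ∧ ((Prod.fst '' KSQ ⊆ Prod.fst '' KSP ∧
        ∀ x ∈ KSQ, ∀ g : S → F, (g, (0 : P → F)) ∈ KSP → (x.1 + g, x.2) ∈ KSQ) →
      matchedComp KSP
          {y : (P → F) × (Q → F) | ∃ f : S → F, (f, y.1) ∈ KSP ∧ (f, y.2) ∈ KSQ}
        = KSQ)
    ∧ (∀ KPQ : Set ((P → F) × (Q → F)), matchedComp KSP KPQ = KSQ →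
        Prod.fst '' KPQ ⊆ Prod.snd '' KSP →
        (∀ y ∈ KPQ, ∀ g : P → F, ((0 : S → F), g) ∈ KSP → (y.1 + g, y.2) ∈ KPQ) →
        KPQ = {y : (P → F) × (Q → F) | ∃ f : S → F, (f, y.1) ∈ KSP ∧ (f, y.2) ∈ KSQ}) := by

  classical
  obtain ⟨z, hz⟩ := hne
  have h0 : (0 : (S → F) × (P → F)) ∈ KSP := by
    have := hsub z hz z hz; simpa using this
  have hadd : ∀ x ∈ KSP, ∀ y ∈ KSP, x + y ∈ KSP := by
    intro x hx y hy
    have hny : (0 : (S → F) × (P → F)) - y ∈ KSP := hsub _ h0 _ hy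
    have := hsub x hx _ hny
    simpa [sub_sub_cancel, sub_neg_eq_add] using this
  -- Part 2 first, as a `have`
  have part2 : (Prod.fst '' KSQ ⊆ Prod.fst '' KSP ∧
        ∀ x ∈ KSQ, ∀ g : S → F, (g, (0 : P → F)) ∈ KSP → (x.1 + g, x.2) ∈ KSQ) →
      matchedComp KSP
          {y : (P → F) × (Q → F) | ∃ f : S → F, (f, y.1) ∈ KSP ∧ (f, y.2) ∈ KSQ}
        = KSQ := by
    rintro ⟨h1, h2⟩
    ext x
    constructor
    · rintro ⟨c, hxc, f, hfc, hfx⟩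
      have hg : (x.1 - f, (0 : P → F)) ∈ KSP := by
        have := hsub _ hxc _ hfc
        simpa [Prod.ext_iff, sub_self] using this
      have := h2 (f, x.2) hfx (x.1 - f) hg
      simpa using this
    · intro hx
      obtain ⟨⟨f, c⟩, hfc, hf⟩ := h1 ⟨x, hx, rfl⟩
      simp only at hf
      subst hf
      exact ⟨c, hfc, x.1, hfc, hx⟩
  refine ⟨⟨?_, fun h => ⟨_, part2 h⟩⟩, part2, ?_⟩
  · rintro ⟨KPQ, rfl⟩
    constructor
    · rintro f ⟨x, ⟨c, hxc, hcx⟩, rfl⟩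
      exact ⟨(x.1, c), hxc, rfl⟩
    · rintro x ⟨c, hxc, hcx⟩ g hg
      exact ⟨c, by simpa using hadd _ hxc _ hg, hcx⟩
  · rintro KPQ rfl hP hclos
    ext y
    constructor
    · intro hy
      obtain ⟨⟨f, p⟩, hfp, hf⟩ := hP ⟨y, hy, rfl⟩
      simp only at hf
      subst hf
      exact ⟨f, hfp, y.1, hfp, hy⟩
    · rintro ⟨f, hfy, c, hfc, hcy⟩
      have hg : ((0 : S → F), y.1 - c) ∈ KSP := by
        have := hsub _ hfy _ hfc
        simpa [Prod.ext_iff, sub_self] using this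
      have := hclos (c, y.2) hcy (y.1 - c) hg
      simpa using this
end
end

section
/- (Strictly passive behaviours always admit a unique maximum power transfer point) Let P be a finite set, E := (P → ℝ) × (P → ℝ), and let V ⊆ E be a strictly passive subspace. Let σ(V^⊥) := {(x,y) ∈ E : (y,x) ∈ V^⊥}. Then V ∩ σ(V^⊥) = {0} and V + σ(V^⊥) = E; consequently, for every a ∈ E the affine set A := a + V contains exactly one point (v₀,i₀) with (i₀,v₀) ∈ V^⊥, i.e. the stationarity (maximum power transfer) condition is always satisfiable on A and its solution is unique. -/
noncomputable section

open scoped BigOperators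

/-- The power `⟨v,i⟩ = Σ_{e∈P} v(e)·i(e)` of a port vector `(v,i)`. -/
def power {P : Type*} [Fintype P] (x : (P → ℝ) × (P → ℝ)) : ℝ :=
  ∑ e, x.1 e * x.2 e

/-- The inner product on `E = (P → ℝ) × (P → ℝ)`. -/
def ipE {P : Type*} [Fintype P] (x y : (P → ℝ) × (P → ℝ)) : ℝ :=
  (∑ e, x.1 e * y.1 e) + ∑ e, x.2 e * y.2 e

/-- Orthogonal complement in `E` with respect to `ipE`. -/
def perpE {P : Type*} [Fintype P] (K : Set ((P → ℝ) × (P → ℝ))) :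
    Set ((P → ℝ) × (P → ℝ)) :=
  {y | ∀ x ∈ K, ipE x y = 0}

/-- The swap `σ(K) := {(x,y) : (y,x) ∈ K}`. -/
def swapSet {P : Type*} (K : Set ((P → ℝ) × (P → ℝ))) : Set ((P → ℝ) × (P → ℝ)) :=
  {z | (z.2, z.1) ∈ K}

/-!
With `B((v,i),(v',i')) := ⟨v,i'⟩ + ⟨i,v'⟩`, the symmetric "polarized power" form on `E`, the set
`σ(V^⊥)` is exactly the `B`-orthogonal complement of `V`, and `B(z,z) = 2⟨v,i⟩`. Strict passivity
says that `B` is anisotropic on `V`, so `V` meets its `B`-orthogonal only in `0`; for a reflexive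
form this already forces `V` and its orthogonal to be complementary, by a dimension count. The
affine statement is then the decomposition `a = u + w` along `E = V ⊕ σ(V^⊥)`.
-/

theorem Submodule.existsUnique_sub_mem_and_mem_of_isCompl {R M : Type*} [Ring R]
    [AddCommGroup M] [Module R M] {p q : Submodule R M} (h : IsCompl p q) (a : M) :
    ∃! x, x - a ∈ p ∧ x ∈ q := by
  obtain ⟨u, hu, w, hw, rfl⟩ := Submodule.mem_sup.mp (h.sup_eq_top ▸ Submodule.mem_top (x := a))
  refine ⟨w, ⟨by simpa using p.neg_mem hu, hw⟩, fun x ⟨hxp, hxq⟩ => ?_⟩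
  have hx : x - w ∈ p ⊓ q :=
    ⟨by rw [show x - w = x - (u + w) + u by abel]; exact p.add_mem hxp hu, q.sub_mem hxq hw⟩
  rw [h.inf_eq_bot, Submodule.mem_bot, sub_eq_zero] at hx
  exact hx

section PowerForm

variable {P : Type*} [Fintype P]

def powerForm (P : Type*) [Fintype P] :
    LinearMap.BilinForm ℝ ((P → ℝ) × (P → ℝ)) :=
  LinearMap.mk₂ ℝ (fun x y => x.1 ⬝ᵥ y.2 + x.2 ⬝ᵥ y.1)
    (fun x x' y => by simp only [Prod.fst_add, Prod.snd_add, add_dotProduct]; ring)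
    (fun c x y => by simp only [Prod.smul_fst, Prod.smul_snd, smul_dotProduct, smul_eq_mul]; ring)
    (fun x y y' => by simp only [Prod.fst_add, Prod.snd_add, dotProduct_add]; ring)
    (fun c x y => by simp only [Prod.smul_fst, Prod.smul_snd, dotProduct_smul, smul_eq_mul]; ring)

theorem powerForm_apply (x y : (P → ℝ) × (P → ℝ)) :
    powerForm P x y = x.1 ⬝ᵥ y.2 + x.2 ⬝ᵥ y.1 :=
  rfl

theorem powerForm_self (x : (P → ℝ) × (P → ℝ)) : powerForm P x x = 2 * power x := by
  rw [powerForm_apply, dotProduct_comm x.2, two_mul]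
  rfl

theorem powerForm_isSymm : (powerForm P).IsSymm :=
  ⟨fun x y => by rw [powerForm_apply, powerForm_apply, dotProduct_comm x.1, dotProduct_comm x.2,
    add_comm]⟩

theorem coe_powerForm_orthogonal (V : Submodule ℝ ((P → ℝ) × (P → ℝ))) :
    ((powerForm P).orthogonal V : Set ((P → ℝ) × (P → ℝ))) = swapSet (perpE (V : Set _)) :=
  rfl

theorem disjoint_powerForm_orthogonal {V : Submodule ℝ ((P → ℝ) × (P → ℝ))}
    (hstrict : ∀ y ∈ V, y ≠ 0 → 0 < power y) : Disjoint V ((powerForm P).orthogonal V) := by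
  refine Submodule.disjoint_def.mpr fun z hzV hzW => by_contra fun hz => ?_
  have h0 : powerForm P z z = 0 := hzW z hzV
  have := hstrict z hzV hz
  rw [powerForm_self] at h0
  linarith

theorem isCompl_powerForm_orthogonal {V : Submodule ℝ ((P → ℝ) × (P → ℝ))}
    (hstrict : ∀ y ∈ V, y ≠ 0 → 0 < power y) : IsCompl V ((powerForm P).orthogonal V) :=
  (LinearMap.BilinForm.isCompl_orthogonal_iff_disjoint powerForm_isSymm.isRefl).mpr
    (disjoint_powerForm_orthogonal hstrict)

end PowerForm

theorem stmt17_general (P : Type*) [Fintype P]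
    (V : Submodule ℝ ((P → ℝ) × (P → ℝ)))
    (hstrict : ∀ y ∈ V, y ≠ 0 → 0 < power y) :
    ((V : Set ((P → ℝ) × (P → ℝ))) ∩ swapSet (perpE (V : Set ((P → ℝ) × (P → ℝ))))
        = {0})
    ∧ ({z : (P → ℝ) × (P → ℝ) | ∃ u ∈ V,
          ∃ w ∈ swapSet (perpE (V : Set ((P → ℝ) × (P → ℝ)))), z = u + w}
        = Set.univ)
    ∧ ∀ a : (P → ℝ) × (P → ℝ),
        ∃! x : (P → ℝ) × (P → ℝ),
          x - a ∈ V ∧ (x.2, x.1) ∈ perpE (V : Set ((P → ℝ) × (P → ℝ))) := by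
  have hcompl := isCompl_powerForm_orthogonal hstrict
  rw [← coe_powerForm_orthogonal]
  refine ⟨?_, ?_, Submodule.existsUnique_sub_mem_and_mem_of_isCompl hcompl⟩
  · rw [← Submodule.coe_inf, hcompl.inf_eq_bot, Submodule.bot_coe]
  · refine Set.eq_univ_of_forall fun z => ?_
    obtain ⟨u, hu, w, hw, rfl⟩ :=
      Submodule.mem_sup.mp (hcompl.sup_eq_top ▸ Submodule.mem_top (x := z))
    exact ⟨u, hu, w, hw, rfl⟩

/-- For a strictly passive subspace `V`, `V ∩ σ(V^⊥) = {0}` and `V + σ(V^⊥) = E`;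
consequently every affine set `a + V` contains exactly one point `(v₀,i₀)` with
`(i₀,v₀) ∈ V^⊥`. -/
theorem stmt17 (P : Type*) [Fintype P]
    (V : Submodule ℝ ((P → ℝ) × (P → ℝ)))
    (hpass : ∀ y ∈ V, 0 ≤ power y)
    (hstrict : ∀ y ∈ V, y ≠ 0 → 0 < power y) :
    ((V : Set ((P → ℝ) × (P → ℝ))) ∩ swapSet (perpE (V : Set ((P → ℝ) × (P → ℝ))))
        = {0})
    ∧ ({z : (P → ℝ) × (P → ℝ) | ∃ u ∈ V,
          ∃ w ∈ swapSet (perpE (V : Set ((P → ℝ) × (P → ℝ)))), z = u + w}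
        = Set.univ)
    ∧ ∀ a : (P → ℝ) × (P → ℝ),
        ∃! x : (P → ℝ) × (P → ℝ),
          x - a ∈ V ∧ (x.2, x.1) ∈ perpE (V : Set ((P → ℝ) × (P → ℝ))) :=
  stmt17_general P V hstrict
end
end

section
/- (Stationarity of power transfer) Let P be a finite set, E := (P → ℝ) × (P → ℝ), and define f : E → ℝ by f(v,i) := Σ_{e∈P} v(e)·i(e). Let V ⊆ E be a subspace, a ∈ E, A := a + V, and (v₀,i₀) ∈ A. Then the Fréchet derivative of f at (v₀,i₀) vanishes on V (i.e. (v₀,i₀) is a stationary point of f restricted to the affine subspace A) if and only if (i₀,v₀) ∈ V^⊥. -/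
noncomputable section

open scoped BigOperators

theorem hasFDerivAt_sum_fst_mul_snd {P : Type*} [Fintype P] (x₀ : (P → ℝ) × (P → ℝ)) :
    HasFDerivAt (fun x : (P → ℝ) × (P → ℝ) => ∑ e, x.1 e * x.2 e)
      (∑ e : P, (x₀.1 e • ((ContinuousLinearMap.proj e).comp
          (ContinuousLinearMap.snd ℝ (P → ℝ) (P → ℝ)))
        + x₀.2 e • ((ContinuousLinearMap.proj e).comp
          (ContinuousLinearMap.fst ℝ (P → ℝ) (P → ℝ))))) x₀ := by
  simpa using HasFDerivAt.fun_sum (u := Finset.univ) fun e _ =>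
    (((ContinuousLinearMap.proj e).comp
        (ContinuousLinearMap.fst ℝ (P → ℝ) (P → ℝ))).hasFDerivAt (x := x₀)).mul
     (((ContinuousLinearMap.proj e).comp
        (ContinuousLinearMap.snd ℝ (P → ℝ) (P → ℝ))).hasFDerivAt (x := x₀))

theorem fderiv_sum_fst_mul_snd_apply {P : Type*} [Fintype P] (x₀ y : (P → ℝ) × (P → ℝ)) :
    fderiv ℝ (fun x : (P → ℝ) × (P → ℝ) => ∑ e, x.1 e * x.2 e) x₀ y = ipE y (x₀.2, x₀.1) := by
  rw [(hasFDerivAt_sum_fst_mul_snd x₀).fderiv]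
  simp [ipE, Finset.sum_add_distrib, mul_comm, add_comm]

theorem stmt19_general (P : Type*) [Fintype P]
    (V : Submodule ℝ ((P → ℝ) × (P → ℝ))) (x₀ : (P → ℝ) × (P → ℝ)) :
    (∀ y ∈ V,
        fderiv ℝ (fun x : (P → ℝ) × (P → ℝ) => ∑ e, x.1 e * x.2 e) x₀ y = 0)
      ↔ (x₀.2, x₀.1) ∈ perpE (V : Set ((P → ℝ) × (P → ℝ))) := by
  simp only [fderiv_sum_fst_mul_snd_apply]
  rfl

/-- Stationarity of power transfer: for `x₀ = (v₀,i₀) ∈ A = a + V`, the Fréchet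
derivative of the power `f(v,i) = Σ_e v(e)·i(e)` at `x₀` vanishes on `V` iff
`(i₀,v₀) ∈ V^⊥`. -/
theorem stmt19 (P : Type*) [Fintype P]
    (V : Submodule ℝ ((P → ℝ) × (P → ℝ))) (a x₀ : (P → ℝ) × (P → ℝ))
    (hx₀ : x₀ - a ∈ V) :
    (∀ y ∈ V,
        fderiv ℝ (fun x : (P → ℝ) × (P → ℝ) => ∑ e, x.1 e * x.2 e) x₀ y = 0)
      ↔ (x₀.2, x₀.1) ∈ perpE (V : Set ((P → ℝ) × (P → ℝ))) :=
  stmt19_general P V x₀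
end
end
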